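/- Let E be a Polish space, let (μ_ε)_{ε>0} be a family of Borel probability measures on E, and let I be a rate function on E. Then the Laplace principle upper bound holds with rate function I — i.e., for every bounded continuous h : E → ℝ, limsup_{ε→0⁺} ε·log ∫_E exp(−h(x)/ε) μ_ε(dx) ≤ −inf_{x∈E}{h(x)+I(x)} — if and only if the large deviation upper bound holds with rate function I, i.e., for every closed set F ⊆ E, limsup_{ε→0⁺} ε·log μ_ε(F) ≤ −inf_{x∈F} I(x). -/

import Mathlib

/-!
For `ε log` of a finite sum the largest term wins:
`limsup ε log ∑ᵢ aᵢ(ε) ≤ maxᵢ limsup ε log aᵢ(ε)`. Slicing the range of a bounded continuous `h`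
into the closed slabs `h⁻¹[kδ, (k+1)δ]` therefore bounds the Laplace integral through the large
deviation bound for finitely many closed sets, up to an error `δ`.

Conversely, for closed `F` and `0 < M < inf_F I`, the compact sublevel set `{I ≤ M}` is disjoint
from `F`, so Urysohn's lemma gives a bounded continuous `g ≥ 0` vanishing on `F` and equal to `M`
on `{I ≤ M}`. Then `μ_ε(F) ≤ ∫ exp(-g/ε) dμ_ε` while `inf (g + I) ≥ M`.
-/

open MeasureTheory Filter Set Topology
open scoped ENNReal NNReal
open BoundedContinuousFunction

noncomputable def upperExpRate (a : ℝ → ℝ≥0∞) : EReal :=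
  limsup (fun ε : ℝ => (ε : EReal) * ENNReal.log (a ε)) (𝓝[>] 0)

lemma EReal.le_of_forall_pos_le_add {x y : EReal} (h : ∀ δ : ℝ, 0 < δ → x ≤ δ + y) : x ≤ y := by
  refine EReal.le_of_forall_lt_iff_le.1 fun z hz => ?_
  induction y using EReal.rec with
  | bot => exact (EReal.add_bot _ ▸ h 1 one_pos).trans bot_le
  | coe b =>
    have hz : b < z := EReal.coe_lt_coe_iff.1 hz
    have := h (z - b) (_root_.sub_pos.2 hz)
    rwa [← EReal.coe_add, _root_.sub_add_cancel] at this
  | top => exact absurd hz (not_lt.2 le_top)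

lemma EReal.limsup_add_le_of_tendsto {α : Type*} {f : Filter α} [f.NeBot] {u v : α → EReal}
    {c : ℝ} (hu : Tendsto u f (𝓝 c)) : limsup (fun a => u a + v a) f ≤ c + limsup v f := by
  have hc := hu.limsup_eq
  refine (EReal.limsup_add_le ?_ ?_).trans_eq ?_ <;> simp [hc]

lemma coe_mul_log_toReal {ε : ℝ} {a : ℝ≥0∞} (ha₀ : a ≠ 0) (ha : a ≠ ⊤) :
    ((ε * Real.log a.toReal : ℝ) : EReal) = ε * ENNReal.log a := by
  rw [ENNReal.log_pos_real ha₀ ha, EReal.coe_mul]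

lemma mul_log_ofReal_exp_div_mul {ε : ℝ} (hε : 0 < ε) (c : ℝ) (a : ℝ≥0∞) :
    (ε : EReal) * ENNReal.log (ENNReal.ofReal (Real.exp (c / ε)) * a) = c + ε * ENNReal.log a := by
  rw [ENNReal.log_mul_add, ENNReal.log_ofReal_of_pos (Real.exp_pos _), Real.log_exp,
    EReal.left_distrib_of_nonneg_of_ne_top (EReal.coe_nonneg.2 hε.le) (EReal.coe_ne_top _),
    ← EReal.coe_mul, mul_div_cancel₀ _ hε.ne']

lemma upperExpRate_mono {a b : ℝ → ℝ≥0∞} (hab : ∀ᶠ ε in 𝓝[>] 0, a ε ≤ b ε) :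
    upperExpRate a ≤ upperExpRate b :=
  limsup_le_limsup <| by
    filter_upwards [hab, self_mem_nhdsWithin] with ε h (hε : 0 < ε)
    exact mul_le_mul_of_nonneg_left (ENNReal.log_le_log h) (EReal.coe_nonneg.2 hε.le)

lemma upperExpRate_ofReal_exp_div_mul_le (c : ℝ) (a : ℝ → ℝ≥0∞) :
    upperExpRate (fun ε => ENNReal.ofReal (Real.exp (c / ε)) * a ε) ≤ c + upperExpRate a := by
  have hc : ∀ᶠ ε : ℝ in 𝓝[>] 0,
      (ε : EReal) * ENNReal.log (ENNReal.ofReal (Real.exp (c / ε)) * a ε) =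
        c + ε * ENNReal.log (a ε) := by
    filter_upwards [self_mem_nhdsWithin] with ε (hε : 0 < ε)
    exact mul_log_ofReal_exp_div_mul hε c (a ε)
  rw [upperExpRate, limsup_congr hc]
  exact EReal.limsup_add_le_of_tendsto tendsto_const_nhds

lemma upperExpRate_sum_le {ι : Type*} {s : Finset ι} (hs : s.Nonempty) (a : ι → ℝ → ℝ≥0∞) :
    upperExpRate (fun ε => ∑ i ∈ s, a i ε) ≤ s.sup' hs fun i => upperExpRate (a i) := by
  have hn : (0 : ℝ) < s.card := by exact_mod_cast hs.card_pos
  have hsum : ∀ᶠ ε : ℝ in 𝓝[>] 0, (ε : EReal) * ENNReal.log (∑ i ∈ s, a i ε) ≤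
      ((ε * Real.log s.card : ℝ) : EReal) +
        s.sup' hs fun i => (ε : EReal) * ENNReal.log (a i ε) := by
    filter_upwards [self_mem_nhdsWithin] with ε (hε : 0 < ε)
    obtain ⟨j, hj, hmax⟩ := s.exists_max_image (fun i => a i ε) hs
    -- `#s = exp (ε log #s / ε)`, so that `mul_log_ofReal_exp_div_mul` applies
    have hle : ∑ i ∈ s, a i ε ≤ ENNReal.ofReal (Real.exp (Real.log s.card * ε / ε)) * a j ε := by
      rw [mul_div_cancel_right₀ _ hε.ne', Real.exp_log hn, ENNReal.ofReal_natCast, ← nsmul_eq_mul]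
      exact s.sum_le_card_nsmul _ _ hmax
    calc _ ≤ (ε : EReal) *
            ENNReal.log (ENNReal.ofReal (Real.exp (Real.log s.card * ε / ε)) * a j ε) :=
          mul_le_mul_of_nonneg_left (ENNReal.log_le_log hle) (EReal.coe_nonneg.2 hε.le)
      _ = ((ε * Real.log s.card : ℝ) : EReal) + ε * ENNReal.log (a j ε) := by
          rw [mul_log_ofReal_exp_div_mul hε, mul_comm]
      _ ≤ _ := add_le_add le_rfl (s.le_sup' (fun i => (ε : EReal) * ENNReal.log (a i ε)) hj)
  have hvanish : Tendsto (fun ε : ℝ => ((ε * Real.log s.card : ℝ) : EReal)) (𝓝[>] 0) (𝓝 0) := by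
    refine EReal.tendsto_coe.2 (tendsto_nhdsWithin_of_tendsto_nhds ?_)
    simpa using (continuous_mul_const (Real.log s.card)).tendsto 0
  calc upperExpRate (fun ε => ∑ i ∈ s, a i ε)
      ≤ limsup (fun ε : ℝ => ((ε * Real.log s.card : ℝ) : EReal) +
          s.sup' hs fun i => (ε : EReal) * ENNReal.log (a i ε)) (𝓝[>] 0) :=
        limsup_le_limsup hsum
    _ ≤ 0 + limsup (fun ε : ℝ => s.sup' hs fun i => (ε : EReal) * ENNReal.log (a i ε))
          (𝓝[>] 0) :=
        EReal.limsup_add_le_of_tendsto hvanish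
    _ = _ := by rw [zero_add, limsup_finset_sup' hs]; rfl

section Slabs

variable {E : Type*}

def slab (h : E → ℝ) (δ : ℝ) (k : ℤ) : Set E := h ⁻¹' Icc (k * δ) ((k + 1) * δ)

lemma mem_slab_floor {h : E → ℝ} {δ : ℝ} (hδ : 0 < δ) (x : E) : x ∈ slab h δ ⌊h x / δ⌋ :=
  ⟨(le_div_iff₀ hδ).1 (Int.floor_le _), ((div_lt_iff₀ hδ).1 (Int.lt_floor_add_one _)).le⟩

lemma floor_div_mem_Icc {C δ t : ℝ} (hδ : 0 < δ) (ht : |t| ≤ C) :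
    ⌊t / δ⌋ ∈ Finset.Icc ⌊-C / δ⌋ ⌊C / δ⌋ :=
  Finset.mem_Icc.2 ⟨Int.floor_mono (div_le_div_of_nonneg_right (neg_le_of_abs_le ht) hδ.le),
    Int.floor_mono (div_le_div_of_nonneg_right (le_of_abs_le ht) hδ.le)⟩

lemma lintegral_exp_le_sum_slab [MeasurableSpace E] (ν : Measure E) {h : E → ℝ}
    (hh : Measurable h) {C : ℝ} (hC : ∀ x, |h x| ≤ C) {δ ε : ℝ} (hδ : 0 < δ) (hε : 0 ≤ ε) :
    ∫⁻ x, ENNReal.ofReal (Real.exp (-h x / ε)) ∂ν ≤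
      ∑ k ∈ Finset.Icc ⌊-C / δ⌋ ⌊C / δ⌋,
        ENNReal.ofReal (Real.exp (-(k * δ) / ε)) * ν (slab h δ k) := by
  have hslab : ∀ k, MeasurableSet (slab h δ k) := fun k => hh measurableSet_Icc
  calc ∫⁻ x, ENNReal.ofReal (Real.exp (-h x / ε)) ∂ν
      ≤ ∫⁻ x, ∑ k ∈ Finset.Icc ⌊-C / δ⌋ ⌊C / δ⌋,
          (slab h δ k).indicator (fun _ => ENNReal.ofReal (Real.exp (-(k * δ) / ε))) x ∂ν := by
        refine lintegral_mono fun x => ?_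
        refine le_trans ?_ (Finset.single_le_sum (fun k _ => zero_le)
          (floor_div_mem_Icc hδ (hC x)))
        rw [indicator_of_mem (mem_slab_floor hδ x)]
        exact ENNReal.ofReal_le_ofReal (Real.exp_le_exp.2
          (div_le_div_of_nonneg_right (neg_le_neg (mem_slab_floor hδ x).1) hε))
    _ = _ := by
        rw [lintegral_finsetSum _ fun k _ => (measurable_const.indicator (hslab k))]
        simp only [lintegral_indicator_const (hslab _)]

end Slabs

section LargeDeviations

variable {E : Type*}

lemma iInf_add_le_coe_add_biInf (h : E → ℝ) (f : E → EReal) {s : Set E} {c : ℝ}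
    (hs : ∀ x ∈ s, h x ≤ c) : ⨅ x, ((h x : EReal) + f x) ≤ c + ⨅ x ∈ s, f x := by
  rw [add_comm, ← EReal.sub_le_iff_le_add (.inl (EReal.coe_ne_bot c)) (.inl (EReal.coe_ne_top c))]
  refine le_iInf₂ fun x hx => ?_
  rw [EReal.sub_le_iff_le_add (.inl (EReal.coe_ne_bot c)) (.inl (EReal.coe_ne_top c)), add_comm]
  exact (iInf_le _ x).trans (add_le_add_left (EReal.coe_le_coe_iff.2 (hs x hx)) _)

lemma exists_penalty_le_iInf_add [TopologicalSpace E] [NormalSpace E] [T2Space E]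
    {I : E → ℝ≥0∞} (hI : ∀ M : ℝ≥0∞, M ≠ ⊤ → IsCompact {x : E | I x ≤ M})
    {F : Set E} (hF : IsClosed F) {M : ℝ} (hM : (M : EReal) < ⨅ x ∈ F, (I x : EReal)) :
    ∃ g : E →ᵇ ℝ, EqOn g 0 F ∧ (M : EReal) ≤ ⨅ x, ((g x : EReal) + I x) := by
  rcases le_or_gt M 0 with hM₀ | hM₀
  · refine ⟨0, fun _ _ => rfl, le_iInf fun x => ?_⟩
    simpa using (EReal.coe_le_coe_iff.2 hM₀).trans (EReal.coe_ennreal_nonneg (I x))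
  set K := {x : E | I x ≤ ENNReal.ofReal M}
  have hKM : ∀ x, x ∈ K ↔ (I x : EReal) ≤ M := fun x => by
    rw [show (M : EReal) = (ENNReal.ofReal M : EReal) by
      rw [EReal.coe_ennreal_ofReal, max_eq_left hM₀.le], EReal.coe_ennreal_le_coe_ennreal_iff]
    rfl
  have hdisj : Disjoint F K := Set.disjoint_left.2 fun x hxF hxK =>
    hM.not_ge ((biInf_le _ hxF).trans ((hKM x).1 hxK))
  obtain ⟨g, hgF, hgK, hg⟩ := exists_bounded_mem_Icc_of_closed_of_le hF
    (hI _ ENNReal.ofReal_ne_top).isClosed hdisj hM₀.le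
  refine ⟨g, hgF, le_iInf fun x => ?_⟩
  by_cases hx : x ∈ K
  · rw [hgK hx]
    exact le_add_of_le_of_nonneg le_rfl (EReal.coe_ennreal_nonneg _)
  · exact le_add_of_nonneg_of_le (EReal.coe_nonneg.2 (hg x).1) (not_le.1 ((hKM x).not.1 hx)).le

variable [MeasurableSpace E]

lemma measure_le_lintegral_exp (ν : Measure E) {g : E → ℝ} (hg : Measurable g) {F : Set E}
    (hgF : EqOn g 0 F) (ε : ℝ) : ν F ≤ ∫⁻ x, ENNReal.ofReal (Real.exp (-g x / ε)) ∂ν := by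
  refine le_trans (measure_mono fun x hx => ?_)
    (one_mul (ν _) ▸ mul_meas_ge_le_lintegral₀ (by fun_prop) 1)
  simp [hgF hx]

lemma limsup_laplace_eq_upperExpRate (μ : ℝ → Measure E)
    (hμ : ∀ ε : ℝ, 0 < ε → IsProbabilityMeasure (μ ε)) {h : E → ℝ} (hh : Measurable h)
    {C : ℝ} (hC : ∀ x, |h x| ≤ C) :
    limsup (fun ε : ℝ => ((ε * Real.log (∫ x, Real.exp (-h x / ε) ∂μ ε) : ℝ) : EReal)) (𝓝[>] 0)
      = upperExpRate (fun ε => ∫⁻ x, ENNReal.ofReal (Real.exp (-h x / ε)) ∂μ ε) := by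
  refine limsup_congr ?_
  filter_upwards [self_mem_nhdsWithin] with ε (hε : 0 < ε)
  have := hμ ε hε
  have hbound : ∀ x, -C / ε ≤ -h x / ε ∧ -h x / ε ≤ C / ε := fun x =>
    ⟨div_le_div_of_nonneg_right (by linarith [abs_le.1 (hC x)]) hε.le,
      div_le_div_of_nonneg_right (by linarith [abs_le.1 (hC x)]) hε.le⟩
  have hpos : ∫⁻ x, ENNReal.ofReal (Real.exp (-h x / ε)) ∂μ ε ≠ 0 := by
    refine (lt_of_lt_of_le ?_ (lintegral_mono fun x => ENNReal.ofReal_le_ofReal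
      (Real.exp_le_exp.2 (hbound x).1))).ne'
    simp [Real.exp_pos]
  have hfin : ∫⁻ x, ENNReal.ofReal (Real.exp (-h x / ε)) ∂μ ε ≠ ⊤ := by
    refine (lt_of_le_of_lt (lintegral_mono fun x => ENNReal.ofReal_le_ofReal
      (Real.exp_le_exp.2 (hbound x).2)) ?_).ne
    simp
  rw [integral_eq_lintegral_of_nonneg_ae (ae_of_all _ fun x => (Real.exp_pos _).le)
    (by fun_prop), coe_mul_log_toReal hpos hfin]

variable [TopologicalSpace E]

lemma upperExpRate_measure_le_of_laplace [NormalSpace E] [T2Space E] [OpensMeasurableSpace E]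
    (μ : ℝ → Measure E) {I : E → ℝ≥0∞} (hI : ∀ M : ℝ≥0∞, M ≠ ⊤ → IsCompact {x : E | I x ≤ M})
    (hLaplace : ∀ g : E →ᵇ ℝ,
      upperExpRate (fun ε => ∫⁻ x, ENNReal.ofReal (Real.exp (-g x / ε)) ∂μ ε) ≤
        -(⨅ x, ((g x : EReal) + I x)))
    {F : Set E} (hF : IsClosed F) :
    upperExpRate (fun ε => μ ε F) ≤ -(⨅ x ∈ F, (I x : EReal)) := by
  refine EReal.le_neg.1 (EReal.ge_of_forall_gt_iff_ge.1 fun M hM => EReal.le_neg.1 ?_)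
  obtain ⟨g, hgF, hMg⟩ := exists_penalty_le_iInf_add hI hF hM
  calc upperExpRate (fun ε => μ ε F)
      ≤ upperExpRate (fun ε => ∫⁻ x, ENNReal.ofReal (Real.exp (-g x / ε)) ∂μ ε) :=
        upperExpRate_mono (Eventually.of_forall fun ε =>
          measure_le_lintegral_exp _ g.continuous.measurable hgF ε)
    _ ≤ -(⨅ x, ((g x : EReal) + I x)) := hLaplace g
    _ ≤ -M := EReal.neg_le_neg_iff.2 hMg

lemma upperExpRate_lintegral_exp_le_of_ldp [OpensMeasurableSpace E] [Nonempty E]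
    (μ : ℝ → Measure E) (I : E → ℝ≥0∞)
    (hLDP : ∀ F : Set E, IsClosed F →
      upperExpRate (fun ε => μ ε F) ≤ -(⨅ x ∈ F, (I x : EReal)))
    {h : E → ℝ} (hh : Continuous h) {C : ℝ} (hC : ∀ x, |h x| ≤ C) :
    upperExpRate (fun ε => ∫⁻ x, ENNReal.ofReal (Real.exp (-h x / ε)) ∂μ ε) ≤
      -(⨅ x, ((h x : EReal) + I x)) := by
  refine EReal.le_of_forall_pos_le_add fun δ hδ => ?_
  set s := Finset.Icc ⌊-C / δ⌋ ⌊C / δ⌋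
  have hs : s.Nonempty := ⟨_, floor_div_mem_Icc hδ (hC (Classical.arbitrary E))⟩
  have hslab : ∀ k : ℤ, ((-(k * δ) : ℝ) : EReal) + upperExpRate (fun ε => μ ε (slab h δ k)) ≤
      δ + -(⨅ x, ((h x : EReal) + I x)) := by
    intro k
    have hinf := iInf_add_le_coe_add_biInf h (fun x => (I x : EReal))
      (s := slab h δ k) (c := (k + 1) * δ) fun x hx => hx.2
    rw [← EReal.neg_le_neg_iff, EReal.neg_add (.inl (EReal.coe_ne_bot _))
      (.inl (EReal.coe_ne_top _)), sub_eq_add_neg] at hinf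
    calc ((-(k * δ) : ℝ) : EReal) + upperExpRate (fun ε => μ ε (slab h δ k))
        ≤ ((δ + -((k + 1) * δ) : ℝ) : EReal) + -(⨅ x ∈ slab h δ k, (I x : EReal)) :=
          add_le_add (le_of_eq (by ring_nf)) (hLDP _ (isClosed_Icc.preimage hh))
      _ ≤ δ + -(⨅ x, ((h x : EReal) + I x)) := by
          rw [EReal.coe_add, add_assoc, EReal.coe_neg]
          exact add_le_add_right hinf _
  calc upperExpRate (fun ε => ∫⁻ x, ENNReal.ofReal (Real.exp (-h x / ε)) ∂μ ε)
      ≤ upperExpRate (fun ε => ∑ k ∈ s,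
          ENNReal.ofReal (Real.exp (-(k * δ) / ε)) * μ ε (slab h δ k)) := by
        refine upperExpRate_mono ?_
        filter_upwards [self_mem_nhdsWithin] with ε (hε : 0 < ε)
        exact lintegral_exp_le_sum_slab _ hh.measurable hC hδ hε.le
    _ ≤ s.sup' hs fun k => upperExpRate (fun ε =>
          ENNReal.ofReal (Real.exp (-(k * δ) / ε)) * μ ε (slab h δ k)) :=
        upperExpRate_sum_le hs _
    _ ≤ δ + -(⨅ x, ((h x : EReal) + I x)) :=
        Finset.sup'_le _ _ fun k _ => (upperExpRate_ofReal_exp_div_mul_le _ _).trans (hslab k)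

end LargeDeviations

theorem stmt_0 {E : Type*} [TopologicalSpace E] [PolishSpace E]
    [MeasurableSpace E] [BorelSpace E]
    (μ : ℝ → Measure E) (hμ : ∀ ε : ℝ, 0 < ε → IsProbabilityMeasure (μ ε))
    (I : E → ℝ≥0∞) (hI : ∀ M : ℝ≥0∞, M ≠ ⊤ → IsCompact {x : E | I x ≤ M}) :
    (∀ h : E → ℝ, Continuous h → (∃ C : ℝ, ∀ x, |h x| ≤ C) →
      Filter.limsup
        (fun ε : ℝ =>
          ((ε * Real.log (∫ x, Real.exp (-(h x) / ε) ∂(μ ε)) : ℝ) : EReal))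
        (𝓝[>] (0:ℝ))
        ≤ -(⨅ x : E, ((h x : EReal) + (I x : EReal))))
    ↔
    (∀ F : Set E, IsClosed F →
      Filter.limsup (fun ε : ℝ => (ε : EReal) * ENNReal.log (μ ε F)) (𝓝[>] (0:ℝ))
        ≤ -(⨅ x ∈ F, (I x : EReal))) := by
  constructor
  · intro hLaplace F hF
    refine upperExpRate_measure_le_of_laplace μ hI (fun g => ?_) hF
    have hg : ∀ x, |g x| ≤ ‖g‖ := g.norm_coe_le_norm
    rw [← limsup_laplace_eq_upperExpRate μ hμ g.continuous.measurable hg]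
    exact hLaplace g g.continuous ⟨_, hg⟩
  · rintro hLDP h hh ⟨C, hC⟩
    have := hμ 1 one_pos
    have := nonempty_of_isProbabilityMeasure (μ 1)
    rw [limsup_laplace_eq_upperExpRate μ hμ hh.measurable hC]
    exact upperExpRate_lintegral_exp_le_of_ldp μ I hLDP hh hC
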